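/- arXiv:1404.5606 — 13 statements merged into one kernel-verified Lean document; each statement's English description precedes it below -/
import Mathlib

section
/- Let f₁ : (M', F') → (M, F) and f₂ : (M, F) → (M'', F'') be linear maps between X-filtered R-modules which are boundedly bicontrolled of filtration degrees ≤ b and ≤ b' respectively. If f₁ is surjective or f₂ is injective, then the composite f₂ ∘ f₁ is boundedly bicontrolled of filtration degree ≤ b + b'. -/
open Metric

variable {X : Type*} [MetricSpace X] {R : Type*} [Ring R]

/-- `f` is boundedly controlled of filtration degree `≤ b` between the `X`-filtered
`R`-modules `(M, F)` and `(N, G)`. -/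
def BddControlled {M N : Type*} [AddCommGroup M] [Module R M] [AddCommGroup N] [Module R N]
    (F : Set X → Submodule R M) (G : Set X → Submodule R N) (f : M →ₗ[R] N) (b : ℝ) : Prop :=
  ∀ S : Set X, (F S).map f ≤ G (cthickening b S)

/-- `f` is boundedly bicontrolled of filtration degree `≤ b`. -/
def BddBicontrolled {M N : Type*} [AddCommGroup M] [Module R M] [AddCommGroup N] [Module R N]
    (F : Set X → Submodule R M) (G : Set X → Submodule R N) (f : M →ₗ[R] N) (b : ℝ) : Prop :=
  BddControlled F G f b ∧
    ∀ S : Set X, LinearMap.range f ⊓ G S ≤ (F (cthickening b S)).map f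

/-- The filtration `F` is `D`-lean. -/
def IsLean {M : Type*} [AddCommGroup M] [Module R M]
    (F : Set X → Submodule R M) (D : ℝ) : Prop :=
  ∀ S : Set X, F S ≤ ⨆ x ∈ S, F (closedBall x D)

/-- The filtration `F` is `D'`-split. -/
def IsSplit {M : Type*} [AddCommGroup M] [Module R M]
    (F : Set X → Submodule R M) (D' : ℝ) : Prop :=
  ∀ T U : Set X, F (T ∪ U) ≤ F (cthickening D' T) + F (cthickening D' U)

/-- The filtration `F` is `d`-insular. -/
def IsInsular {M : Type*} [AddCommGroup M] [Module R M]
    (F : Set X → Submodule R M) (d : ℝ) : Prop :=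
  ∀ S U : Set X, F S ⊓ F U ≤ F (cthickening d S ∩ cthickening d U)

/-- If `f₁ : (M',F') → (M,F)` and `f₂ : (M,F) → (M'',F'')` are boundedly
bicontrolled of filtration degrees `≤ b` and `≤ b'` respectively, and `f₁` is surjective or
`f₂` is injective, then `f₂ ∘ f₁` is boundedly bicontrolled of filtration degree `≤ b + b'`. -/
theorem bddBicontrolled_comp
    {M' M M'' : Type*} [AddCommGroup M'] [Module R M'] [AddCommGroup M] [Module R M]
    [AddCommGroup M''] [Module R M'']
    (F' : Set X → Submodule R M') (F : Set X → Submodule R M) (F'' : Set X → Submodule R M'')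
    (hF'mono : Monotone F') (hF'top : F' Set.univ = ⊤)
    (hFmono : Monotone F) (hFtop : F Set.univ = ⊤)
    (hF''mono : Monotone F'') (hF''top : F'' Set.univ = ⊤)
    (f₁ : M' →ₗ[R] M) (f₂ : M →ₗ[R] M'')
    {b b' : ℝ} (hb : 0 ≤ b) (hb' : 0 ≤ b')
    (h₁ : BddBicontrolled F' F f₁ b) (h₂ : BddBicontrolled F F'' f₂ b')
    (h : Function.Surjective f₁ ∨ Function.Injective f₂) :
    BddBicontrolled F' F'' (f₂.comp f₁) (b + b') := by
  constructor
  · intro S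
    rw [Submodule.map_comp]
    calc ((F' S).map f₁).map f₂ ≤ (F (cthickening b S)).map f₂ :=
          Submodule.map_mono (h₁.1 S)
      _ ≤ F'' (cthickening b' (cthickening b S)) := h₂.1 _
      _ ≤ F'' (cthickening (b + b') S) := by
          refine hF''mono ?_
          rw [add_comm]
          exact cthickening_cthickening_subset hb' hb S
  · intro S x hx
    obtain ⟨⟨z₀, hz₀⟩, hxS⟩ := hx
    have hx2 : x ∈ LinearMap.range f₂ ⊓ F'' S := ⟨⟨f₁ z₀, hz₀⟩, hxS⟩
    obtain ⟨y, hyF, hyx⟩ := h₂.2 S hx2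
    have hy1 : y ∈ LinearMap.range f₁ := by
      rcases h with hs | hi
      · exact hs y
      · exact ⟨z₀, hi (by rw [hyx]; exact hz₀)⟩
    obtain ⟨z, hzF, hzy⟩ := h₁.2 _ ⟨hy1, hyF⟩
    refine ⟨z, ?_, by simp [LinearMap.comp_apply, hzy, hyx]⟩
    refine hF'mono ?_ hzF
    exact cthickening_cthickening_subset hb hb' S
end

section
/- Let f₁ : (M', F') → (M, F) and f₂ : (M, F) → (M'', F'') be linear maps between X-filtered R-modules and set f₃ = f₂ ∘ f₁. Suppose f₁ is surjective and boundedly bicontrolled of filtration degree ≤ b. If f₃ is boundedly bicontrolled of filtration degree ≤ b', then f₂ is boundedly bicontrolled of filtration degree ≤ b + b'; if f₃ is merely boundedly controlled of filtration degree ≤ b', then f₂ is boundedly controlled of filtration degree ≤ b + b'. -/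
open Metric

variable {X : Type*} [MetricSpace X] {R : Type*} [Ring R]

/-- Suppose `f₁ : (M',F') → (M,F)` is surjective and boundedly bicontrolled
of filtration degree `≤ b`, and let `f₃ = f₂ ∘ f₁`.  If `f₃` is boundedly bicontrolled of
degree `≤ b'`, then `f₂` is boundedly bicontrolled of degree `≤ b + b'`; if `f₃` is merely
boundedly controlled of degree `≤ b'`, then `f₂` is boundedly controlled of degree `≤ b + b'`. -/
theorem bddBicontrolled_of_comp_surjective
    {M' M M'' : Type*} [AddCommGroup M'] [Module R M'] [AddCommGroup M] [Module R M]
    [AddCommGroup M''] [Module R M'']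
    (F' : Set X → Submodule R M') (F : Set X → Submodule R M) (F'' : Set X → Submodule R M'')
    (hF'mono : Monotone F') (hF'top : F' Set.univ = ⊤)
    (hFmono : Monotone F) (hFtop : F Set.univ = ⊤)
    (hF''mono : Monotone F'') (hF''top : F'' Set.univ = ⊤)
    (f₁ : M' →ₗ[R] M) (f₂ : M →ₗ[R] M'')
    {b b' : ℝ} (hb : 0 ≤ b) (hb' : 0 ≤ b')
    (hsurj : Function.Surjective f₁) (h₁ : BddBicontrolled F' F f₁ b) :
    (BddBicontrolled F' F'' (f₂.comp f₁) b' → BddBicontrolled F F'' f₂ (b + b')) ∧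
    (BddControlled F' F'' (f₂.comp f₁) b' → BddControlled F F'' f₂ (b + b')) := by

  have hctrl : BddControlled F' F'' (f₂.comp f₁) b' → BddControlled F F'' f₂ (b + b') := by
    intro h₃ S x hx
    obtain ⟨m, hmS, rfl⟩ := hx
    obtain ⟨y, hy, hfy⟩ := h₁.2 S ⟨hsurj m, hmS⟩
    have : f₂ (f₁ y) ∈ F'' (cthickening b' (cthickening b S)) :=
      h₃ (cthickening b S) ⟨y, hy, rfl⟩
    rw [hfy] at this
    exact hF''mono (by simpa [add_comm] using cthickening_cthickening_subset hb' hb S) this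
  refine ⟨fun h₃ => ⟨hctrl h₃.1, fun S x hx => ?_⟩, hctrl⟩
  obtain ⟨⟨m, rfl⟩, hxS⟩ := hx
  have hx3 : f₂ m ∈ LinearMap.range (f₂.comp f₁) ⊓ F'' S := by
    obtain ⟨y, rfl⟩ := hsurj m
    exact ⟨⟨y, rfl⟩, hxS⟩
  obtain ⟨y, hy, hfy⟩ := h₃.2 S hx3
  refine ⟨f₁ y, ?_, hfy⟩
  exact hFmono (cthickening_cthickening_subset hb hb' S) (h₁.1 _ ⟨y, hy, rfl⟩)
end

section
/- Let f₁ : (M', F') → (M, F) and f₂ : (M, F) → (M'', F'') be linear maps between X-filtered R-modules and set f₃ = f₂ ∘ f₁. Suppose f₂ is injective and boundedly bicontrolled of filtration degree ≤ b. If f₃ is boundedly bicontrolled of filtration degree ≤ b', then f₁ is boundedly bicontrolled of filtration degree ≤ b + b'; if f₃ is merely boundedly controlled of filtration degree ≤ b', then f₁ is boundedly controlled of filtration degree ≤ b + b'. -/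
open Metric

variable {X : Type*} [MetricSpace X] {R : Type*} [Ring R]

/-- Suppose `f₂ : (M,F) → (M'',F'')` is injective and boundedly bicontrolled
of filtration degree `≤ b`, and let `f₃ = f₂ ∘ f₁`.  If `f₃` is boundedly bicontrolled of
degree `≤ b'`, then `f₁` is boundedly bicontrolled of degree `≤ b + b'`; if `f₃` is merely
boundedly controlled of degree `≤ b'`, then `f₁` is boundedly controlled of degree `≤ b + b'`. -/
theorem bddBicontrolled_of_comp_injective
    {M' M M'' : Type*} [AddCommGroup M'] [Module R M'] [AddCommGroup M] [Module R M]
    [AddCommGroup M''] [Module R M'']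
    (F' : Set X → Submodule R M') (F : Set X → Submodule R M) (F'' : Set X → Submodule R M'')
    (hF'mono : Monotone F') (hF'top : F' Set.univ = ⊤)
    (hFmono : Monotone F) (hFtop : F Set.univ = ⊤)
    (hF''mono : Monotone F'') (hF''top : F'' Set.univ = ⊤)
    (f₁ : M' →ₗ[R] M) (f₂ : M →ₗ[R] M'')
    {b b' : ℝ} (hb : 0 ≤ b) (hb' : 0 ≤ b')
    (hinj : Function.Injective f₂) (h₂ : BddBicontrolled F F'' f₂ b) :
    (BddBicontrolled F' F'' (f₂.comp f₁) b' → BddBicontrolled F' F f₁ (b + b')) ∧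
    (BddControlled F' F'' (f₂.comp f₁) b' → BddControlled F' F f₁ (b + b')) := by
  have key : BddControlled F' F'' (f₂.comp f₁) b' → BddControlled F' F f₁ (b + b') := by
    intro h₃ S
    rintro _ ⟨x, hx, rfl⟩
    have h1 : f₂ (f₁ x) ∈ F'' (cthickening b' S) := h₃ S ⟨x, hx, rfl⟩
    have h2 : f₂ (f₁ x) ∈ (F (cthickening b (cthickening b' S))).map f₂ :=
      h₂.2 (cthickening b' S) ⟨⟨f₁ x, rfl⟩, h1⟩
    obtain ⟨y, hy, hyx⟩ := h2
    have : y = f₁ x := hinj hyx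
    subst this
    exact hFmono (cthickening_cthickening_subset hb hb' S) hy
  refine ⟨fun h₃ => ⟨key h₃.1, fun S => ?_⟩, key⟩
  rintro y ⟨⟨x, rfl⟩, hy⟩
  have h1 : f₂ (f₁ x) ∈ F'' (cthickening b S) := h₂.1 S ⟨f₁ x, hy, rfl⟩
  have h2 : f₂ (f₁ x) ∈ (F' (cthickening b' (cthickening b S))).map (f₂.comp f₁) :=
    h₃.2 (cthickening b S) ⟨⟨x, rfl⟩, h1⟩
  obtain ⟨z, hz, hzx⟩ := h2
  have : f₁ z = f₁ x := hinj hzx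
  refine ⟨z, hF'mono ?_ hz, this⟩
  rw [add_comm]
  exact cthickening_cthickening_subset hb' hb S
end

section
/- Let f : (M, F) → (N, G) be an isomorphism in U(X,R), i.e. a bijective boundedly controlled linear map between X-filtered R-modules whose inverse is also boundedly controlled. If F is lean, then G is lean; if F is insular, then G is insular. -/
open Metric

variable {X : Type*} [MetricSpace X] {R : Type*} [Ring R]

lemma cthickening_closedBall_subset' {x : X} {b D : ℝ} (hb : 0 ≤ b) :
    cthickening b (closedBall x D) ⊆ closedBall x (b + D + 1) := by
  refine (cthickening_subset_thickening' (δ₁ := b) (δ₂ := b + 1) (by linarith) (by linarith) _).trans ?_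
  intro z hz
  obtain ⟨w, hw, hzw⟩ := mem_thickening_iff.mp hz
  have := mem_closedBall.mp hw
  exact mem_closedBall.mpr ((dist_triangle z w x).trans (by linarith))

/-- Let `f : (M,F) → (N,G)` be an isomorphism in `U(X,R)`: a bijective
boundedly controlled linear map whose inverse is also boundedly controlled.  If `F` is lean
then `G` is lean, and if `F` is insular then `G` is insular. -/
theorem lean_insular_invariant_under_iso
    {M N : Type*} [AddCommGroup M] [Module R M] [AddCommGroup N] [Module R N]
    (F : Set X → Submodule R M) (G : Set X → Submodule R N)
    (hFmono : Monotone F) (hFtop : F Set.univ = ⊤)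
    (hGmono : Monotone G) (hGtop : G Set.univ = ⊤)
    (f : M →ₗ[R] N) (g : N →ₗ[R] M)
    (hgf : g.comp f = LinearMap.id) (hfg : f.comp g = LinearMap.id)
    {b c : ℝ} (hb : 0 ≤ b) (hc : 0 ≤ c)
    (hf : BddControlled F G f b) (hg : BddControlled G F g c) :
    ((∃ D : ℝ, 0 ≤ D ∧ IsLean F D) → ∃ D : ℝ, 0 ≤ D ∧ IsLean G D) ∧
    ((∃ d : ℝ, 0 ≤ d ∧ IsInsular F d) → ∃ d : ℝ, 0 ≤ d ∧ IsInsular G d) := by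
  have hfgy : ∀ y : N, f (g y) = y := fun y => congrArg (fun h => h y) hfg
  constructor
  · rintro ⟨D, hD, hFlean⟩
    refine ⟨b + D + c + 2, by linarith, fun S y hy => ?_⟩
    have h1 : g y ∈ F (cthickening c S) := hg S ⟨y, hy, rfl⟩
    have h2 : g y ∈ ⨆ x ∈ cthickening c S, F (closedBall x D) := hFlean _ h1
    have h3 : y ∈ Submodule.map f (⨆ x ∈ cthickening c S, F (closedBall x D)) :=
      ⟨g y, h2, hfgy y⟩
    revert h3
    refine fun h3 => ?_
    have hmap : Submodule.map f (⨆ x ∈ cthickening c S, F (closedBall x D)) ≤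
        ⨆ x ∈ S, G (closedBall x (b + D + c + 2)) := by
      rw [Submodule.map_iSup]
      refine iSup_le fun x => ?_
      rw [Submodule.map_iSup]
      refine iSup_le fun hx => ?_
      -- x is within c+1 of some point of S
      have hx' : x ∈ thickening (c + 1) S :=
        cthickening_subset_thickening' (by linarith) (by linarith) S hx
      obtain ⟨x', hx'S, hdist⟩ := mem_thickening_iff.mp hx'
      have step1 : Submodule.map f (F (closedBall x D)) ≤
          G (closedBall x' (b + D + c + 2)) := by
        refine (hf _).trans (hGmono ?_)
        refine (cthickening_closedBall_subset' hb).trans ?_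
        exact closedBall_subset_closedBall' (by linarith)
      exact step1.trans (le_iSup₂ (f := fun x _ => G (closedBall x (b + D + c + 2))) x' hx'S)
    exact hmap h3
  · rintro ⟨d, hd, hFins⟩
    refine ⟨b + d + c, by linarith, fun S U y hy => ?_⟩
    obtain ⟨hyS, hyU⟩ := hy
    have h1 : g y ∈ F (cthickening c S) := hg S ⟨y, hyS, rfl⟩
    have h2 : g y ∈ F (cthickening c U) := hg U ⟨y, hyU, rfl⟩
    have h3 : g y ∈ F (cthickening d (cthickening c S) ∩ cthickening d (cthickening c U)) :=
      hFins _ _ ⟨h1, h2⟩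
    have h4 : y ∈ G (cthickening b
        (cthickening d (cthickening c S) ∩ cthickening d (cthickening c U))) :=
      hf _ ⟨g y, h3, hfgy y⟩
    refine hGmono ?_ h4
    refine Set.subset_inter ?_ ?_
    · refine (cthickening_subset_of_subset b Set.inter_subset_left).trans ?_
      refine (cthickening_subset_of_subset b (cthickening_cthickening_subset hd hc S)).trans ?_
      refine (cthickening_cthickening_subset hb (by linarith) S).trans ?_
      simp [show b + (d + c) = b + d + c by ring, le_refl]
    · refine (cthickening_subset_of_subset b Set.inter_subset_right).trans ?_
      refine (cthickening_subset_of_subset b (cthickening_cthickening_subset hd hc U)).trans ?_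
      refine (cthickening_cthickening_subset hb (by linarith) U).trans ?_
      simp [show b + (d + c) = b + d + c by ring, le_refl]
end

section
/- Let f : (M, F) → (N, G) be an isomorphism in U(X,R), i.e. a bijective boundedly controlled linear map between X-filtered R-modules whose inverse is also boundedly controlled. If F is split, then G is split. -/
open Metric

variable {X : Type*} [MetricSpace X] {R : Type*} [Ring R]

/-- Let `f : (M,F) → (N,G)` be an isomorphism in `U(X,R)`: a bijective
boundedly controlled linear map whose inverse is also boundedly controlled.  If `F` is split
then `G` is split. -/
theorem split_invariant_under_iso
    {M N : Type*} [AddCommGroup M] [Module R M] [AddCommGroup N] [Module R N]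
    (F : Set X → Submodule R M) (G : Set X → Submodule R N)
    (hFmono : Monotone F) (hFtop : F Set.univ = ⊤)
    (hGmono : Monotone G) (hGtop : G Set.univ = ⊤)
    (f : M →ₗ[R] N) (g : N →ₗ[R] M)
    (hgf : g.comp f = LinearMap.id) (hfg : f.comp g = LinearMap.id)
    {b c : ℝ} (hb : 0 ≤ b) (hc : 0 ≤ c)
    (hf : BddControlled F G f b) (hg : BddControlled G F g c) :
    (∃ D' : ℝ, 0 ≤ D' ∧ IsSplit F D') → ∃ D' : ℝ, 0 ≤ D' ∧ IsSplit G D' := by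
  rintro ⟨D', hD', hsplit⟩
  refine ⟨b + D' + c, by positivity, ?_⟩
  intro T U y hy
  have h1 : g y ∈ F (cthickening c (T ∪ U)) := hg _ ⟨y, hy, rfl⟩
  rw [cthickening_union] at h1
  obtain ⟨m1, hm1, m2, hm2, hsum⟩ := Submodule.mem_sup.mp (hsplit _ _ h1)
  have hy' : y = f m1 + f m2 := by
    have : f (g y) = y := LinearMap.congr_fun hfg y
    rw [← this, ← hsum, map_add]
  have key : ∀ (m : M) (S : Set X), m ∈ F (cthickening D' (cthickening c S)) →
      f m ∈ G (cthickening (b + D' + c) S) := by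
    intro m S hm
    have h2 : f m ∈ G (cthickening b (cthickening D' (cthickening c S))) :=
      hf _ ⟨m, hm, rfl⟩
    refine hGmono ?_ h2
    calc cthickening b (cthickening D' (cthickening c S))
        ⊆ cthickening (b + D') (cthickening c S) :=
          cthickening_cthickening_subset hb hD' _
      _ ⊆ cthickening (b + D' + c) S :=
          cthickening_cthickening_subset (by positivity) hc _
  rw [hy']
  exact Submodule.add_mem_sup (key m1 T hm1) (key m2 U hm2)
end

section
/- Let E' →f E →g E'' be an exact sequence in U(X,R). If E' and E'' are split, then E is split. (Quantitatively: if f and g are boundedly bicontrolled of filtration degree ≤ b and E', E'' are D'-split, then E is (4b+2D')-split.) -/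
open Metric

variable {X : Type*} [MetricSpace X] {R : Type*} [Ring R]

variable {E' E E'' : Type*} [AddCommGroup E'] [Module R E'] [AddCommGroup E] [Module R E]
  [AddCommGroup E''] [Module R E'']

/-- Split objects are closed under exact extensions in `U(X,R)`:
if `E' →f E →g E''` is exact, `f` and `g` are boundedly bicontrolled of filtration degree
`≤ b`, and `E'`, `E''` are `D'`-split, then `E` is `(4b+2D')`-split. -/
theorem isSplit_of_extension
    (F' : Set X → Submodule R E') (F : Set X → Submodule R E) (F'' : Set X → Submodule R E'')
    (hF'mono : Monotone F') (hF'top : F' Set.univ = ⊤)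
    (hFmono : Monotone F) (hFtop : F Set.univ = ⊤)
    (hF''mono : Monotone F'') (hF''top : F'' Set.univ = ⊤)
    (f : E' →ₗ[R] E) (g : E →ₗ[R] E'')
    {b : ℝ} (hb : 0 ≤ b)
    (hf : BddBicontrolled F' F f b) (hg : BddBicontrolled F F'' g b)
    (hfinj : Function.Injective f) (hgsurj : Function.Surjective g)
    (hexact : LinearMap.range f = LinearMap.ker g)
    {D' : ℝ} (hD' : 0 ≤ D')
    (h' : IsSplit F' D') (h'' : IsSplit F'' D') :
    IsSplit F (4 * b + 2 * D') := by
  intro T U z hz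
  -- Step 1: g z lands in F'' of the b-thickening of T ∪ U, which splits.
  have hgz : g z ∈ F'' (cthickening b T ∪ cthickening b U) := by
    have := hg.1 (T ∪ U) (Submodule.mem_map_of_mem hz)
    rwa [cthickening_union] at this
  obtain ⟨u'', hu'', v'', hv'', huv⟩ := Submodule.mem_sup.mp
    (by have := h'' _ _ hgz; rwa [Submodule.add_eq_sup] at this)
  have hgtop : LinearMap.range g = ⊤ := LinearMap.range_eq_top.mpr hgsurj
  -- Step 2: lift u'' and v'' with control.
  obtain ⟨u, hu, hgu⟩ := hg.2 _ ⟨by simp [hgtop], hu''⟩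
  obtain ⟨v, hv, hgv⟩ := hg.2 _ ⟨by simp [hgtop], hv''⟩
  -- u ∈ F (cthickening (2b+D') T)
  have huT : u ∈ F (cthickening (2 * b + D') T) := by
    refine hFmono ?_ hu
    refine ((cthickening_cthickening_subset hb hD' _).trans ?_)
    refine (cthickening_cthickening_subset (by linarith) hb T).trans ?_
    rw [show b + D' + b = 2 * b + D' by ring]
  have hvU : v ∈ F (cthickening (2 * b + D') U) := by
    refine hFmono ?_ hv
    refine ((cthickening_cthickening_subset hb hD' _).trans ?_)
    refine (cthickening_cthickening_subset (by linarith) hb U).trans ?_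
    rw [show b + D' + b = 2 * b + D' by ring]
  -- Step 3: z - u - v is in range f ⊓ F (cthickening (2b+D') (T ∪ U)).
  have hker : z - u - v ∈ LinearMap.range f := by
    rw [hexact, LinearMap.mem_ker, map_sub, map_sub, hgu, hgv]
    rw [← huv]; abel
  have hzW : z - u - v ∈ F (cthickening (2 * b + D') (T ∪ U)) := by
    have hzm : z ∈ F (cthickening (2 * b + D') (T ∪ U)) :=
      hFmono (self_subset_cthickening _) hz
    have hum : u ∈ F (cthickening (2 * b + D') (T ∪ U)) :=
      hFmono (cthickening_subset_of_subset _ Set.subset_union_left) huT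
    have hvm : v ∈ F (cthickening (2 * b + D') (T ∪ U)) :=
      hFmono (cthickening_subset_of_subset _ Set.subset_union_right) hvU
    exact sub_mem (sub_mem hzm hum) hvm
  obtain ⟨w, hw, hfw⟩ := hf.2 _ ⟨hker, hzW⟩
  -- Step 4: split w in F'.
  have hw' : w ∈ F' (cthickening (3 * b + D') T ∪ cthickening (3 * b + D') U) := by
    refine hF'mono ?_ hw
    refine (cthickening_cthickening_subset hb (by linarith) _).trans ?_
    rw [show b + (2 * b + D') = 3 * b + D' by ring, cthickening_union]
  obtain ⟨w1, hw1, w2, hw2, hw12⟩ := Submodule.mem_sup.mp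
    (by have := h' _ _ hw'; rwa [Submodule.add_eq_sup] at this)
  -- Step 5: push forward and assemble.
  have hfw1 : f w1 ∈ F (cthickening (4 * b + 2 * D') T) := by
    refine hFmono ?_ (hf.1 _ (Submodule.mem_map_of_mem hw1))
    refine (cthickening_subset_of_subset _
      (cthickening_cthickening_subset hD' (by linarith) T)).trans ?_
    exact (cthickening_cthickening_subset hb (by linarith) T).trans
      (by rw [show b + (D' + (3 * b + D')) = 4 * b + 2 * D' by ring])
  have hfw2 : f w2 ∈ F (cthickening (4 * b + 2 * D') U) := by
    refine hFmono ?_ (hf.1 _ (Submodule.mem_map_of_mem hw2))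
    refine (cthickening_subset_of_subset _
      (cthickening_cthickening_subset hD' (by linarith) U)).trans ?_
    exact (cthickening_cthickening_subset hb (by linarith) U).trans
      (by rw [show b + (D' + (3 * b + D')) = 4 * b + 2 * D' by ring])
  have huT' : u ∈ F (cthickening (4 * b + 2 * D') T) :=
    hFmono (cthickening_mono (by linarith) T) huT
  have hvU' : v ∈ F (cthickening (4 * b + 2 * D') U) :=
    hFmono (cthickening_mono (by linarith) U) hvU
  have hzeq : z = (f w1 + u) + (f w2 + v) := by
    have hfw12 : f w1 + f w2 = z - u - v := by rw [← map_add, hw12, hfw]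
    rw [sub_sub, eq_sub_iff_add_eq] at hfw12
    rw [← hfw12]; abel
  rw [hzeq]
  exact Submodule.add_mem_sup (add_mem hfw1 huT') (add_mem hfw2 hvU')
end

section
/- Let E' →f E →g E'' be an exact sequence in U(X,R). If E' and E'' are insular, then E is insular. (Quantitatively: if f and g are boundedly bicontrolled of filtration degree ≤ b and E', E'' are d-insular, then E is (4b+2d)-insular.) -/
open Metric

variable {X : Type*} [MetricSpace X] {R : Type*} [Ring R]

variable {E' E E'' : Type*} [AddCommGroup E'] [Module R E'] [AddCommGroup E] [Module R E]
  [AddCommGroup E''] [Module R E'']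

/-- Insular objects are closed under exact extensions in `U(X,R)`:
if `E' →f E →g E''` is exact, `f` and `g` are boundedly bicontrolled of filtration degree
`≤ b`, and `E'`, `E''` are `d`-insular, then `E` is `(4b+2d)`-insular. -/
theorem isInsular_of_extension
    (F' : Set X → Submodule R E') (F : Set X → Submodule R E) (F'' : Set X → Submodule R E'')
    (hF'mono : Monotone F') (hF'top : F' Set.univ = ⊤)
    (hFmono : Monotone F) (hFtop : F Set.univ = ⊤)
    (hF''mono : Monotone F'') (hF''top : F'' Set.univ = ⊤)
    (f : E' →ₗ[R] E) (g : E →ₗ[R] E'')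
    {b : ℝ} (hb : 0 ≤ b)
    (hf : BddBicontrolled F' F f b) (hg : BddBicontrolled F F'' g b)
    (hfinj : Function.Injective f) (hgsurj : Function.Surjective g)
    (hexact : LinearMap.range f = LinearMap.ker g)
    {d : ℝ} (hd : 0 ≤ d)
    (h' : IsInsular F' d) (h'' : IsInsular F'' d) :
    IsInsular F (4 * b + 2 * d) := by
  have key : ∀ (a c e : ℝ) (s : Set X), 0 ≤ a → 0 ≤ c → a + c ≤ e →
      cthickening a (cthickening c s) ⊆ cthickening e s := fun a c e s ha hc hace =>
    (cthickening_cthickening_subset ha hc s).trans (cthickening_mono hace s)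
  intro S U x hx
  obtain ⟨hxS, hxU⟩ := hx
  have hgxS : g x ∈ F'' (cthickening b S) := hg.1 S ⟨x, hxS, rfl⟩
  have hgxU : g x ∈ F'' (cthickening b U) := hg.1 U ⟨x, hxU, rfl⟩
  have hgx : g x ∈ F'' (cthickening d (cthickening b S) ∩ cthickening d (cthickening b U)) :=
    h'' _ _ ⟨hgxS, hgxU⟩
  obtain ⟨y, hy, hgy⟩ := hg.2 _ ⟨⟨x, rfl⟩, hgx⟩
  set T := cthickening b (cthickening d (cthickening b S) ∩ cthickening d (cthickening b U))
    with hT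
  have hTV : ∀ V : Set X, cthickening b (cthickening d (cthickening b V)) ⊆
      cthickening (2*b+d) V := by
    intro V
    refine (key b d (b+d) _ hb hd le_rfl).trans ?_
    exact key (b+d) b (2*b+d) _ (by linarith) hb (by linarith)
  have hTS : T ⊆ cthickening (2*b+d) S :=
    (cthickening_subset_of_subset b Set.inter_subset_left).trans (hTV S)
  have hTU : T ⊆ cthickening (2*b+d) U :=
    (cthickening_subset_of_subset b Set.inter_subset_right).trans (hTV U)
  have hker : x - y ∈ LinearMap.range f := by
    rw [hexact, LinearMap.mem_ker, map_sub, hgy, sub_self]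
  have hxS' : x - y ∈ F (cthickening (2*b+d) S) :=
    sub_mem (hFmono (self_subset_cthickening S) hxS) (hFmono hTS hy)
  have hxU' : x - y ∈ F (cthickening (2*b+d) U) :=
    sub_mem (hFmono (self_subset_cthickening U) hxU) (hFmono hTU hy)
  obtain ⟨z, hz, hfz⟩ := hf.2 _ ⟨hker, hxS'⟩
  obtain ⟨z', hz', hfz'⟩ := hf.2 _ ⟨hker, hxU'⟩
  have hzz' : z' = z := hfinj (hfz'.trans hfz.symm)
  subst hzz'
  have hz2 : z' ∈ F' (cthickening d (cthickening b (cthickening (2*b+d) S)) ∩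
      cthickening d (cthickening b (cthickening (2*b+d) U))) := h' _ _ ⟨hz, hz'⟩
  have hfz2 : x - y ∈ F (cthickening b
      (cthickening d (cthickening b (cthickening (2*b+d) S)) ∩
        cthickening d (cthickening b (cthickening (2*b+d) U)))) := by
    have := hf.1 _ ⟨z', hz2, rfl⟩
    rwa [hfz] at this
  have hsub : ∀ V : Set X, cthickening b (cthickening d (cthickening b (cthickening (2*b+d) V)))
      ⊆ cthickening (4*b+2*d) V := by
    intro V
    refine (key b d (b+d) _ hb hd le_rfl).trans ?_
    refine (key (b+d) b (2*b+d) _ (by linarith) hb (by linarith)).trans ?_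
    exact key (2*b+d) (2*b+d) (4*b+2*d) _ (by linarith) (by linarith) (by linarith)
  have hfinal : x - y ∈ F (cthickening (4*b+2*d) S ∩ cthickening (4*b+2*d) U) :=
    hFmono (Set.subset_inter
      ((cthickening_subset_of_subset b Set.inter_subset_left).trans (hsub S))
      ((cthickening_subset_of_subset b Set.inter_subset_right).trans (hsub U))) hfz2
  have hyfinal : y ∈ F (cthickening (4*b+2*d) S ∩ cthickening (4*b+2*d) U) :=
    hFmono (Set.subset_inter (hTS.trans (cthickening_mono (by linarith) S))
      (hTU.trans (cthickening_mono (by linarith) U))) hy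
  have : x - y + y ∈ F (cthickening (4*b+2*d) S ∩ cthickening (4*b+2*d) U) :=
    add_mem hfinal hyfinal
  rwa [sub_add_cancel] at this
end

section
/- Let E' →f E →g E'' be an exact sequence in U(X,R). Then: (1) if E is lean, then E'' is lean; (2) if E is split, then E'' is split; (3) if E is insular, then E' is insular. -/
open Metric

variable {X : Type*} [MetricSpace X] {R : Type*} [Ring R]

variable {E' E E'' : Type*} [AddCommGroup E'] [Module R E'] [AddCommGroup E] [Module R E]
  [AddCommGroup E''] [Module R E'']

/-- Let `E' →f E →g E''` be an exact sequence in `U(X,R)`.  Then: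
(1) if `E` is lean, then `E''` is lean; (2) if `E` is split, then `E''` is split;
(3) if `E` is insular, then `E'` is insular. -/
theorem lean_split_insular_inheritance
    (F' : Set X → Submodule R E') (F : Set X → Submodule R E) (F'' : Set X → Submodule R E'')
    (hF'mono : Monotone F') (hF'top : F' Set.univ = ⊤)
    (hFmono : Monotone F) (hFtop : F Set.univ = ⊤)
    (hF''mono : Monotone F'') (hF''top : F'' Set.univ = ⊤)
    (f : E' →ₗ[R] E) (g : E →ₗ[R] E'')
    (hf : ∃ b : ℝ, 0 ≤ b ∧ BddBicontrolled F' F f b)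
    (hg : ∃ b : ℝ, 0 ≤ b ∧ BddBicontrolled F F'' g b)
    (hfinj : Function.Injective f) (hgsurj : Function.Surjective g)
    (hexact : LinearMap.range f = LinearMap.ker g) :
    ((∃ D : ℝ, 0 ≤ D ∧ IsLean F D) → ∃ D : ℝ, 0 ≤ D ∧ IsLean F'' D) ∧
    ((∃ D' : ℝ, 0 ≤ D' ∧ IsSplit F D') → ∃ D' : ℝ, 0 ≤ D' ∧ IsSplit F'' D') ∧
    ((∃ d : ℝ, 0 ≤ d ∧ IsInsular F d) → ∃ d : ℝ, 0 ≤ d ∧ IsInsular F' d) := by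
  obtain ⟨b, hb0, hfctl, hfbi⟩ := hf
  obtain ⟨c, hc0, hgctl, hgbi⟩ := hg
  refine ⟨?_, ?_, ?_⟩
  · -- lean
    rintro ⟨D, hD0, hlean⟩
    refine ⟨D + c + (c + 1), by linarith, fun S z hz => ?_⟩
    -- lift z
    obtain ⟨m, hm, hgm⟩ := hgbi S (Submodule.mem_inf.mpr ⟨LinearMap.mem_range.mpr (hgsurj z), hz⟩)
    have hm' := hlean (cthickening c S) hm
    -- push through g
    have : z ∈ Submodule.map g (⨆ x ∈ cthickening c S, F (closedBall x D)) :=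
      ⟨m, hm', hgm⟩
    simp only [Submodule.map_iSup] at this
    refine (iSup₂_le fun x hx => ?_ :
      (⨆ x ∈ cthickening c S, Submodule.map g (F (closedBall x D))) ≤
        ⨆ s ∈ S, F'' (closedBall s (D + c + (c + 1)))) this
    obtain ⟨s, hsS, hds⟩ := mem_thickening_iff.mp
      (cthickening_subset_thickening' (show (0:ℝ) < c + 1 by linarith)
        (show c < c + 1 by linarith) S hx)
    have h1 : Submodule.map g (F (closedBall x D)) ≤ F'' (cthickening c (closedBall x D)) :=
      hgctl _
    have h2 : cthickening c (closedBall x D) ⊆ closedBall s (D + c + (c + 1)) := by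
      intro y hy
      rw [← cthickening_singleton x hD0] at hy
      have := cthickening_cthickening_subset hc0 hD0 _ hy
      rw [cthickening_singleton x (by linarith)] at this
      have hd := mem_closedBall.mp this
      have : dist y s ≤ dist y x + dist x s := dist_triangle y x s
      exact mem_closedBall.mpr (by linarith)
    refine le_trans h1 (le_trans (hF''mono h2) ?_)
    exact le_iSup₂_of_le s hsS le_rfl
  · -- split
    rintro ⟨D', hD'0, hsplit⟩
    refine ⟨c + D' + c, by linarith, fun T U z hz => ?_⟩
    obtain ⟨m, hm, hgm⟩ := hgbi (T ∪ U)
      (Submodule.mem_inf.mpr ⟨LinearMap.mem_range.mpr (hgsurj z), hz⟩)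
    rw [cthickening_union] at hm
    have hm' := hsplit _ _ hm
    obtain ⟨u, hu, v, hv, huv⟩ := Submodule.mem_sup.mp hm'
    have hgu : g u ∈ F'' (cthickening (c + D' + c) T) := by
      refine hF''mono ?_ (hgctl _ ⟨u, hu, rfl⟩)
      calc cthickening c (cthickening D' (cthickening c T))
          ⊆ cthickening (c + D') (cthickening c T) :=
            cthickening_cthickening_subset hc0 hD'0 _
        _ ⊆ cthickening (c + D' + c) T := cthickening_cthickening_subset (by linarith) hc0 _
    have hgv : g v ∈ F'' (cthickening (c + D' + c) U) := by
      refine hF''mono ?_ (hgctl _ ⟨v, hv, rfl⟩)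
      calc cthickening c (cthickening D' (cthickening c U))
          ⊆ cthickening (c + D') (cthickening c U) :=
            cthickening_cthickening_subset hc0 hD'0 _
        _ ⊆ cthickening (c + D' + c) U := cthickening_cthickening_subset (by linarith) hc0 _
    have : z = g u + g v := by rw [← map_add, huv, hgm]
    rw [this]
    exact Submodule.add_mem_sup hgu hgv
  · -- insular
    rintro ⟨d, hd0, hins⟩
    refine ⟨b + d + b, by linarith, fun S U x hx => ?_⟩
    have hfx : f x ∈ F (cthickening b S) ⊓ F (cthickening b U) :=
      ⟨hfctl S ⟨x, hx.1, rfl⟩, hfctl U ⟨x, hx.2, rfl⟩⟩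
    have hfx' := hins _ _ hfx
    obtain ⟨x', hx', hfx''⟩ := hfbi _ ⟨⟨x, rfl⟩, hfx'⟩
    rw [← hfinj hfx'']
    refine hF'mono ?_ hx'
    have key : ∀ V : Set X,
        cthickening b (cthickening d (cthickening b V)) ⊆ cthickening (b + d + b) V := by
      intro V
      exact (cthickening_cthickening_subset hb0 hd0 _).trans
        (cthickening_cthickening_subset (by linarith) hb0 V)
    intro y hy
    exact ⟨key S (cthickening_subset_of_subset b Set.inter_subset_left hy),
      key U (cthickening_subset_of_subset b Set.inter_subset_right hy)⟩
end

section
/- Let E' →f E →g E'' be an exact sequence in U(X,R). If E is insular and E' is lean, then E'' is insular. (Quantitatively: if f and g are boundedly bicontrolled of filtration degree ≤ b, E is d-insular and E' is D-lean, then E'' is (4b+D+d)-insular.) -/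
open Metric

variable {X : Type*} [MetricSpace X] {R : Type*} [Ring R]

variable {E' E E'' : Type*} [AddCommGroup E'] [Module R E'] [AddCommGroup E] [Module R E]
  [AddCommGroup E''] [Module R E'']

/-- Let `E' →f E →g E''` be an exact sequence in `U(X,R)` with `f`, `g`
boundedly bicontrolled of filtration degree `≤ b`.  If `E` is `d`-insular and `E'` is
`D`-lean, then `E''` is `(4b+D+d)`-insular. -/
theorem quotient_insular_of_lean_sub
    (F' : Set X → Submodule R E') (F : Set X → Submodule R E) (F'' : Set X → Submodule R E'')
    (hF'mono : Monotone F') (hF'top : F' Set.univ = ⊤)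
    (hFmono : Monotone F) (hFtop : F Set.univ = ⊤)
    (hF''mono : Monotone F'') (hF''top : F'' Set.univ = ⊤)
    (f : E' →ₗ[R] E) (g : E →ₗ[R] E'')
    {b : ℝ} (hb : 0 ≤ b)
    (hf : BddBicontrolled F' F f b) (hg : BddBicontrolled F F'' g b)
    (hfinj : Function.Injective f) (hgsurj : Function.Surjective g)
    (hexact : LinearMap.range f = LinearMap.ker g)
    {d D : ℝ} (hd : 0 ≤ d) (hD : 0 ≤ D)
    (hins : IsInsular F d) (hlean : IsLean F' D) :
    IsInsular F'' (4 * b + D + d) := by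
  intro S U z hz
  obtain ⟨hzS, hzU⟩ := hz
  obtain ⟨y, hy, hyz⟩ := hg.2 S ⟨LinearMap.range_eq_top.2 hgsurj ▸ Submodule.mem_top, hzS⟩
  obtain ⟨y', hy', hy'z⟩ := hg.2 U ⟨LinearMap.range_eq_top.2 hgsurj ▸ Submodule.mem_top, hzU⟩
  have hker : y - y' ∈ LinearMap.range f := by
    rw [hexact, LinearMap.mem_ker, map_sub, hyz, hy'z, sub_self]
  have hmem : y - y' ∈ F (cthickening b S ∪ cthickening b U) :=
    sub_mem (hFmono Set.subset_union_left hy) (hFmono Set.subset_union_right hy')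
  obtain ⟨w, hw, hwf⟩ := hf.2 (cthickening b S ∪ cthickening b U) ⟨hker, hmem⟩
  rw [cthickening_union] at hw
  have hball : ∀ (T : Set X) (x : X), x ∈ cthickening b (cthickening b T) →
      closedBall x D ⊆ cthickening (2 * b + D) T := by
    intro T x hx
    refine (closedBall_subset_cthickening_singleton x D).trans ?_
    have h1 : cthickening D {x} ⊆ cthickening D (cthickening b (cthickening b T)) :=
      cthickening_subset_of_subset D (Set.singleton_subset_iff.2 hx)
    refine h1.trans <| (cthickening_cthickening_subset hD (by linarith) _).trans <|
      (cthickening_cthickening_subset (by linarith) hb _).trans ?_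
    rw [show D + b + b = 2 * b + D by ring]
  have hsplit : w ∈ F' (cthickening (2 * b + D) S) ⊔ F' (cthickening (2 * b + D) U) := by
    have hlw := hlean _ hw
    rw [iSup_union] at hlw
    have hA := iSup₂_le fun x hx => hF'mono (hball S x hx)
    have hB := iSup₂_le fun x hx => hF'mono (hball U x hx)
    exact sup_le_sup hA hB hlw
  obtain ⟨w₁, hw₁, w₂, hw₂, hww⟩ := Submodule.mem_sup.1 hsplit
  set y'' := y - f w₁ with hy''def
  have himg : ∀ (T : Set X) (v : E'), v ∈ F' (cthickening (2 * b + D) T) →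
      f v ∈ F (cthickening (3 * b + D) T) := by
    intro T v hv
    have h1 : f v ∈ F (cthickening b (cthickening (2 * b + D) T)) := hf.1 _ ⟨v, hv, rfl⟩
    exact hFmono ((cthickening_cthickening_subset hb (by linarith) _).trans
      (by rw [show b + (2 * b + D) = 3 * b + D by ring])) h1
  have hy''S : y'' ∈ F (cthickening (3 * b + D) S) :=
    sub_mem (hFmono (cthickening_mono (by linarith) _) hy) (himg S w₁ hw₁)
  have hy''U : y'' ∈ F (cthickening (3 * b + D) U) := by
    have hrw : y'' = y' + f w₂ := by
      have h2 : f w₂ = y - y' - f w₁ := by rw [← hwf, ← hww, map_add]; abel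
      rw [hy''def, h2]; abel
    rw [hrw]
    exact add_mem (hFmono (cthickening_mono (by linarith) _) hy') (himg U w₂ hw₂)
  have hins' := hins _ _ ⟨hy''S, hy''U⟩
  have hgz : g y'' = z := by
    have hk : f w₁ ∈ LinearMap.ker g := hexact ▸ ⟨w₁, rfl⟩
    rw [hy''def, map_sub, hyz, LinearMap.mem_ker.1 hk, sub_zero]
  have hz' : z ∈ F'' (cthickening b (cthickening d (cthickening (3 * b + D) S) ∩
      cthickening d (cthickening (3 * b + D) U))) := hgz ▸ hg.1 _ ⟨y'', hins', rfl⟩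
  refine hF''mono ?_ hz'
  have hside : ∀ T : Set X, cthickening b (cthickening d (cthickening (3 * b + D) T)) ⊆
      cthickening (4 * b + D + d) T := by
    intro T
    refine (cthickening_cthickening_subset hb hd _).trans <|
      (cthickening_cthickening_subset (by linarith) (by linarith) _).trans ?_
    rw [show b + d + (3 * b + D) = 4 * b + D + d by ring]
  intro x hx
  have hx' := cthickening_subset_of_subset b (Set.inter_subset_left (t := cthickening d (cthickening (3 * b + D) U))) hx
  have hx'' := cthickening_subset_of_subset b (Set.inter_subset_right (s := cthickening d (cthickening (3 * b + D) S))) hx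
  exact ⟨hside S hx', hside U hx''⟩
end

section
/- Let E' →f E →g E'' be an exact sequence in U(X,R). If E is insular and E' is split, then E'' is insular. (Quantitatively: if f and g are boundedly bicontrolled of filtration degree ≤ b, E is d-insular and E' is D'-split, then E'' is (4b+D'+d)-insular.) -/
open Metric

variable {X : Type*} [MetricSpace X] {R : Type*} [Ring R]

variable {E' E E'' : Type*} [AddCommGroup E'] [Module R E'] [AddCommGroup E] [Module R E]
  [AddCommGroup E''] [Module R E'']

/-- Let `E' →f E →g E''` be an exact sequence in `U(X,R)` with `f`, `g`
boundedly bicontrolled of filtration degree `≤ b`.  If `E` is `d`-insular and `E'` is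
`D'`-split, then `E''` is `(4b+D'+d)`-insular. -/
theorem quotient_insular_of_split_sub
    (F' : Set X → Submodule R E') (F : Set X → Submodule R E) (F'' : Set X → Submodule R E'')
    (hF'mono : Monotone F') (hF'top : F' Set.univ = ⊤)
    (hFmono : Monotone F) (hFtop : F Set.univ = ⊤)
    (hF''mono : Monotone F'') (hF''top : F'' Set.univ = ⊤)
    (f : E' →ₗ[R] E) (g : E →ₗ[R] E'')
    {b : ℝ} (hb : 0 ≤ b)
    (hf : BddBicontrolled F' F f b) (hg : BddBicontrolled F F'' g b)
    (hfinj : Function.Injective f) (hgsurj : Function.Surjective g)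
    (hexact : LinearMap.range f = LinearMap.ker g)
    {d D' : ℝ} (hd : 0 ≤ d) (hD' : 0 ≤ D')
    (hins : IsInsular F d) (hsplit : IsSplit F' D') :
    IsInsular F'' (4 * b + D' + d) := by
  intro S U
  rintro z ⟨hzS, hzU⟩
  have hgrange : LinearMap.range g = ⊤ := LinearMap.range_eq_top.mpr hgsurj
  obtain ⟨x, hx, hgx⟩ := hg.2 S ⟨by simp [hgrange], hzS⟩
  obtain ⟨y, hy, hgy⟩ := hg.2 U ⟨by simp [hgrange], hzU⟩
  have hker : x - y ∈ LinearMap.range f := by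
    rw [hexact, LinearMap.mem_ker, map_sub, hgx, hgy, sub_self]
  have hmem : x - y ∈ F (cthickening b S ∪ cthickening b U) :=
    sub_mem (hFmono Set.subset_union_left hx) (hFmono Set.subset_union_right hy)
  obtain ⟨w, hw, hfw⟩ := hf.2 _ ⟨hker, hmem⟩
  rw [cthickening_union] at hw
  have hw2 : w ∈ F' (cthickening (2 * b) S ∪ cthickening (2 * b) U) := by
    refine hF'mono (Set.union_subset_union ?_ ?_) hw <;>
      · refine (cthickening_cthickening_subset hb hb _).trans ?_
        exact cthickening_mono (by linarith) _
  obtain ⟨w₁, hw₁, w₂, hw₂, hww⟩ := Submodule.mem_sup.mp (hsplit _ _ hw2)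
  set c : ℝ := 3 * b + D' with hc
  have hsub : ∀ V : Set X, cthickening b (cthickening D' (cthickening (2*b) V)) ⊆ cthickening c V := by
    intro V
    calc cthickening b (cthickening D' (cthickening (2*b) V))
        ⊆ cthickening (b + D') (cthickening (2*b) V) := cthickening_cthickening_subset hb hD' _
      _ ⊆ cthickening (b + D' + 2*b) V := cthickening_cthickening_subset (by linarith) (by linarith) _
      _ ⊆ cthickening c V := cthickening_mono (by linarith) _
  have hfw₁ : f w₁ ∈ F (cthickening c S) := hFmono (hsub S) (hf.1 _ (Submodule.mem_map_of_mem hw₁))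
  have hfw₂ : f w₂ ∈ F (cthickening c U) := hFmono (hsub U) (hf.1 _ (Submodule.mem_map_of_mem hw₂))
  have hxS : x ∈ F (cthickening c S) := hFmono (cthickening_mono (by linarith) _) hx
  have hyU : y ∈ F (cthickening c U) := hFmono (cthickening_mono (by linarith) _) hy
  have key : x - f w₁ = y + f w₂ := by
    have h : f w₁ + f w₂ = x - y := by rw [← map_add, hww, hfw]
    rw [← sub_eq_zero, show x - f w₁ - (y + f w₂) = x - y - (f w₁ + f w₂) by abel, h, sub_self]
  have hmid : x - f w₁ ∈ F (cthickening d (cthickening c S) ∩ cthickening d (cthickening c U)) := by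
    refine hins _ _ ⟨sub_mem hxS hfw₁, ?_⟩
    rw [key]; exact add_mem hyU hfw₂
  have hz : z = g (x - f w₁) := by
    have h0 : g (f w₁) = 0 := by
      have : f w₁ ∈ LinearMap.ker g := hexact ▸ LinearMap.mem_range_self f w₁
      exact this
    rw [map_sub, h0, sub_zero, hgx]
  have hgmid := hg.1 _ (Submodule.mem_map_of_mem hmid)
  rw [← hz] at hgmid
  have hsub2 : ∀ V : Set X, cthickening b (cthickening d (cthickening c V)) ⊆ cthickening (4*b+D'+d) V := by
    intro V
    calc cthickening b (cthickening d (cthickening c V))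
        ⊆ cthickening (b + d) (cthickening c V) := cthickening_cthickening_subset hb hd _
      _ ⊆ cthickening (b + d + c) V := cthickening_cthickening_subset (by linarith) (by linarith) _
      _ ⊆ cthickening (4*b+D'+d) V := cthickening_mono (by linarith) _
  refine hF''mono (Set.subset_inter ?_ ?_) hgmid
  · exact (cthickening_subset_of_subset _ Set.inter_subset_left).trans (hsub2 S)
  · exact (cthickening_subset_of_subset _ Set.inter_subset_right).trans (hsub2 U)
end

section
/- Let E' →f E →g E'' be an exact sequence in U(X,R). If E is split and E'' is insular, then E' is split. (Quantitatively: if f and g are boundedly bicontrolled of filtration degree ≤ b, E is D'-split and E'' is d-insular, then E' is (4b+D'+d)-split.) -/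
open Metric

variable {X : Type*} [MetricSpace X] {R : Type*} [Ring R]

variable {E' E E'' : Type*} [AddCommGroup E'] [Module R E'] [AddCommGroup E] [Module R E]
  [AddCommGroup E''] [Module R E'']

private lemma cth_cth {a c e : ℝ} (ha : 0 ≤ a) (hc : 0 ≤ c) (h : a + c ≤ e) (S : Set X) :
    cthickening a (cthickening c S) ⊆ cthickening e S :=
  (cthickening_cthickening_subset ha hc S).trans (cthickening_mono h S)

/-- Let `E' →f E →g E''` be an exact sequence in `U(X,R)` with `f`, `g`
boundedly bicontrolled of filtration degree `≤ b`.  If `E` is `D'`-split and `E''` is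
`d`-insular, then `E'` is `(4b+D'+d)`-split. -/
theorem sub_split_of_quotient_insular
    (F' : Set X → Submodule R E') (F : Set X → Submodule R E) (F'' : Set X → Submodule R E'')
    (hF'mono : Monotone F') (hF'top : F' Set.univ = ⊤)
    (hFmono : Monotone F) (hFtop : F Set.univ = ⊤)
    (hF''mono : Monotone F'') (hF''top : F'' Set.univ = ⊤)
    (f : E' →ₗ[R] E) (g : E →ₗ[R] E'')
    {b : ℝ} (hb : 0 ≤ b)
    (hf : BddBicontrolled F' F f b) (hg : BddBicontrolled F F'' g b)
    (hfinj : Function.Injective f) (hgsurj : Function.Surjective g)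
    (hexact : LinearMap.range f = LinearMap.ker g)
    {D' d : ℝ} (hD' : 0 ≤ D') (hd : 0 ≤ d)
    (hsplit : IsSplit F D') (hins : IsInsular F'' d) :
    IsSplit F' (4 * b + D' + d) := by
  intro T U x hx
  -- f x lands in F of the b-thickening of T ∪ U
  have h1 : f x ∈ F (cthickening b T ∪ cthickening b U) := by
    have := hf.1 (T ∪ U) ⟨x, hx, rfl⟩
    rwa [cthickening_union] at this
  have h2 := hsplit (cthickening b T) (cthickening b U) h1
  rw [Submodule.add_eq_sup] at h2
  obtain ⟨y, hy, z, hz, hyz⟩ := Submodule.mem_sup.mp h2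
  -- abbreviation: C S = cthickening (3b+D'+d) S
  set e : ℝ := 3 * b + D' + d with he
  have hyC : y ∈ F (cthickening e T) :=
    hFmono (cth_cth hD' hb (by linarith) T) hy
  have hzC : z ∈ F (cthickening e U) :=
    hFmono (cth_cth hD' hb (by linarith) U) hz
  -- g y = - g z, both controlled
  have hsub : ∀ S : Set X, cthickening b (cthickening D' (cthickening b S)) ⊆
      cthickening (2 * b + D') S := fun S =>
    (cthickening_subset_of_subset b (cth_cth hD' hb le_rfl S)).trans
      (cth_cth hb (by linarith) (by linarith) S)
  have hgy : g y ∈ F'' (cthickening (2 * b + D') T) :=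
    hF''mono (hsub T) (hg.1 _ ⟨y, hy, rfl⟩)
  have hgyz : g y + g z = 0 := by
    rw [← map_add, hyz]
    exact LinearMap.mem_ker.mp (hexact ▸ LinearMap.mem_range_self f x)
  have hgy' : g y ∈ F'' (cthickening (2 * b + D') U) := by
    have hgz : g z ∈ F'' (cthickening (2 * b + D') U) :=
      hF''mono (hsub U) (hg.1 _ ⟨z, hz, rfl⟩)
    rw [eq_neg_of_add_eq_zero_left hgyz]
    exact neg_mem hgz
  -- insularity & bicontrol of g: find w
  have hins' : g y ∈ F'' (cthickening d (cthickening (2 * b + D') T) ∩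
      cthickening d (cthickening (2 * b + D') U)) := hins _ _ ⟨hgy, hgy'⟩
  obtain ⟨w, hw, hww⟩ := hg.2 _ ⟨LinearMap.range_eq_top.mpr hgsurj ▸ Submodule.mem_top, hins'⟩
  have hwT : w ∈ F (cthickening e T) := by
    refine hFmono ?_ hw
    refine Set.Subset.trans (cthickening_subset_of_subset b (Set.inter_subset_left)) ?_
    exact (cth_cth hb hd (le_refl _) _).trans (cth_cth (by linarith) (by linarith) (by linarith) T)
  have hwU : w ∈ F (cthickening e U) := by
    refine hFmono ?_ hw
    refine Set.Subset.trans (cthickening_subset_of_subset b (Set.inter_subset_right)) ?_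
    exact (cth_cth hb hd (le_refl _) _).trans (cth_cth (by linarith) (by linarith) (by linarith) U)
  -- y - w and z + w are in ker g = range f
  have hker1 : y - w ∈ LinearMap.range f := by
    rw [hexact, LinearMap.mem_ker, map_sub, hww, sub_self]
  have hker2 : z + w ∈ LinearMap.range f := by
    rw [hexact, LinearMap.mem_ker, map_add, hww, add_comm]
    exact hgyz
  obtain ⟨u, hu, huf⟩ := hf.2 _ ⟨hker1, sub_mem hyC hwT⟩
  obtain ⟨v, hv, hvf⟩ := hf.2 _ ⟨hker2, add_mem hzC hwU⟩
  have hx' : x = u + v := by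
    apply hfinj
    rw [map_add, huf, hvf, ← hyz]; abel
  rw [Submodule.add_eq_sup]
  refine Submodule.mem_sup.mpr ⟨u, ?_, v, ?_, hx'.symm⟩
  · exact hF'mono (cth_cth hb (by linarith) (by linarith) T) hu
  · exact hF'mono (cth_cth hb (by linarith) (by linarith) U) hv
end

section
/- Let E' →f E →g E'' be an exact sequence in U(X,R), and suppose E is both split and insular. Then E'' is insular if and only if E' is split. -/
open Metric

variable {X : Type*} [MetricSpace X] {R : Type*} [Ring R]

variable {E' E E'' : Type*} [AddCommGroup E'] [Module R E'] [AddCommGroup E] [Module R E]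
  [AddCommGroup E''] [Module R E'']

/-- Auxiliary: composing two closed thickenings, then enlarging the radius. -/
lemma cthick_comp {a b r : ℝ} (ha : 0 ≤ a) (hb : 0 ≤ b) (h : a + b ≤ r) (S : Set X) :
    cthickening a (cthickening b S) ⊆ cthickening r S :=
  (cthickening_cthickening_subset ha hb S).trans (cthickening_mono h S)

/-- Let `E' →f E →g E''` be an exact sequence in `U(X,R)` with `E` both
split and insular.  Then `E''` is insular if and only if `E'` is split. -/
theorem quotient_insular_iff_sub_split
    (F' : Set X → Submodule R E') (F : Set X → Submodule R E) (F'' : Set X → Submodule R E'')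
    (hF'mono : Monotone F') (hF'top : F' Set.univ = ⊤)
    (hFmono : Monotone F) (hFtop : F Set.univ = ⊤)
    (hF''mono : Monotone F'') (hF''top : F'' Set.univ = ⊤)
    (f : E' →ₗ[R] E) (g : E →ₗ[R] E'')
    (hf : ∃ b : ℝ, 0 ≤ b ∧ BddBicontrolled F' F f b)
    (hg : ∃ b : ℝ, 0 ≤ b ∧ BddBicontrolled F F'' g b)
    (hfinj : Function.Injective f) (hgsurj : Function.Surjective g)
    (hexact : LinearMap.range f = LinearMap.ker g)
    (hsplit : ∃ D' : ℝ, 0 ≤ D' ∧ IsSplit F D')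
    (hins : ∃ d : ℝ, 0 ≤ d ∧ IsInsular F d) :
    (∃ d : ℝ, 0 ≤ d ∧ IsInsular F'' d) ↔ (∃ D' : ℝ, 0 ≤ D' ∧ IsSplit F' D') := by
  obtain ⟨b, hb, hfc, hfb⟩ := hf
  obtain ⟨c, hc, hgc, hgb⟩ := hg
  obtain ⟨D', hD', hFsplit⟩ := hsplit
  obtain ⟨d, hd, hFins⟩ := hins
  have hgf : ∀ v : E', g (f v) = 0 := fun v =>
    (LinearMap.mem_ker).mp (hexact ▸ LinearMap.mem_range_self f v)
  constructor
  · rintro ⟨d'', hd'', hins''⟩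
    refine ⟨2*b + 2*c + D' + d'', by positivity, ?_⟩
    intro T U x hx
    set m : ℝ := D' + b with hm
    set A : ℝ := c + d'' + (c + m) with hA
    have hAnn : (0:ℝ) ≤ A := by positivity
    have h1 : f x ∈ F (cthickening b T ∪ cthickening b U) := by
      have := hfc (T ∪ U) ⟨x, hx, rfl⟩
      rwa [cthickening_union] at this
    have h2 := hFsplit _ _ h1
    rw [Submodule.add_eq_sup, Submodule.mem_sup] at h2
    obtain ⟨y, hy, z, hz, hyz⟩ := h2
    have hyT : y ∈ F (cthickening m T) :=
      hFmono (cthickening_cthickening_subset hD' hb T) hy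
    have hzU : z ∈ F (cthickening m U) :=
      hFmono (cthickening_cthickening_subset hD' hb U) hz
    have hgyT : g y ∈ F'' (cthickening (c + m) T) :=
      hF''mono (cthick_comp hc (by positivity) le_rfl T) (hgc _ ⟨y, hyT, rfl⟩)
    have hgzU : g z ∈ F'' (cthickening (c + m) U) :=
      hF''mono (cthick_comp hc (by positivity) le_rfl U) (hgc _ ⟨z, hzU, rfl⟩)
    have hsum0 : g y + g z = 0 := by
      have : g (y + z) = 0 := by rw [hyz]; exact hgf x
      simpa using this
    have hgyU : g y ∈ F'' (cthickening (c + m) U) := by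
      have : g y = -(g z) := eq_neg_of_add_eq_zero_left hsum0
      rw [this]; exact neg_mem hgzU
    set S₀ : Set X :=
      cthickening d'' (cthickening (c + m) T) ∩ cthickening d'' (cthickening (c + m) U) with hS₀
    have hgyS₀ : g y ∈ F'' S₀ := hins'' _ _ ⟨hgyT, hgyU⟩
    obtain ⟨w, hw, hgw⟩ := hgb S₀ ⟨⟨y, rfl⟩, hgyS₀⟩
    have hwT : w ∈ F (cthickening A T) := by
      refine hFmono ?_ hw
      refine (cthickening_subset_of_subset c Set.inter_subset_left).trans ?_
      refine (cthick_comp hc hd'' le_rfl _).trans ?_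
      exact cthick_comp (by positivity) (by positivity) le_rfl T
    have hwU : w ∈ F (cthickening A U) := by
      refine hFmono ?_ hw
      refine (cthickening_subset_of_subset c Set.inter_subset_right).trans ?_
      refine (cthick_comp hc hd'' le_rfl _).trans ?_
      exact cthick_comp (by positivity) (by positivity) le_rfl U
    have hmA : m ≤ A := by simp only [hA]; linarith
    have hywT : y - w ∈ F (cthickening A T) :=
      sub_mem (hFmono (cthickening_mono hmA T) hyT) hwT
    have hzwU : z + w ∈ F (cthickening A U) :=
      add_mem (hFmono (cthickening_mono hmA U) hzU) hwU
    have hywker : y - w ∈ LinearMap.range f := by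
      rw [hexact, LinearMap.mem_ker, map_sub, hgw, sub_self]
    have hzwker : z + w ∈ LinearMap.range f := by
      rw [hexact, LinearMap.mem_ker, map_add, hgw, add_comm]
      exact hsum0
    obtain ⟨u₁, hu₁F, hu₁⟩ := hfb (cthickening A T) ⟨hywker, hywT⟩
    obtain ⟨u₂, hu₂F, hu₂⟩ := hfb (cthickening A U) ⟨hzwker, hzwU⟩
    have hxeq : x = u₁ + u₂ := by
      apply hfinj
      rw [map_add, hu₁, hu₂, ← hyz]; abel
    have hfin : b + A ≤ 2*b + 2*c + D' + d'' := by simp only [hA, hm]; linarith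
    rw [hxeq, Submodule.add_eq_sup]
    exact Submodule.add_mem_sup
      (hF'mono (cthick_comp hb hAnn hfin T) hu₁F)
      (hF'mono (cthick_comp hb hAnn hfin U) hu₂F)
  · rintro ⟨D₁, hD₁, hsplit'⟩
    refine ⟨2*b + 2*c + D₁ + d, by positivity, ?_⟩
    rintro S U x'' ⟨hxS, hxU⟩
    set e : ℝ := b + (D₁ + (b + c)) with he
    have henn : (0:ℝ) ≤ e := by positivity
    obtain ⟨y, hy, hgy⟩ := hgb S ⟨hgsurj x'', hxS⟩
    obtain ⟨z, hz, hgz⟩ := hgb U ⟨hgsurj x'', hxU⟩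
    have hyz : y - z ∈ F (cthickening c S ∪ cthickening c U) :=
      sub_mem (hFmono Set.subset_union_left hy) (hFmono Set.subset_union_right hz)
    have hyzker : y - z ∈ LinearMap.range f := by
      rw [hexact, LinearMap.mem_ker, map_sub, hgy, hgz, sub_self]
    obtain ⟨u, huF, hu⟩ := hfb _ ⟨hyzker, hyz⟩
    have huF' : u ∈ F' (cthickening (b + c) S ∪ cthickening (b + c) U) := by
      refine hF'mono ?_ huF
      rw [cthickening_union]
      exact Set.union_subset_union (cthickening_cthickening_subset hb hc S)
        (cthickening_cthickening_subset hb hc U)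
    have h3 := hsplit' _ _ huF'
    rw [Submodule.add_eq_sup, Submodule.mem_sup] at h3
    obtain ⟨u₁, hu₁, u₂, hu₂, huu⟩ := h3
    have hu₁S : u₁ ∈ F' (cthickening (D₁ + (b + c)) S) :=
      hF'mono (cthickening_cthickening_subset hD₁ (by positivity) S) hu₁
    have hu₂U : u₂ ∈ F' (cthickening (D₁ + (b + c)) U) :=
      hF'mono (cthickening_cthickening_subset hD₁ (by positivity) U) hu₂
    have hfu₁ : f u₁ ∈ F (cthickening e S) :=
      hFmono (cthick_comp hb (by positivity) le_rfl S) (hfc _ ⟨u₁, hu₁S, rfl⟩)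
    have hfu₂ : f u₂ ∈ F (cthickening e U) :=
      hFmono (cthick_comp hb (by positivity) le_rfl U) (hfc _ ⟨u₂, hu₂U, rfl⟩)
    have hce : c ≤ e := by simp only [he]; linarith
    have hv1 : y - f u₁ ∈ F (cthickening e S) :=
      sub_mem (hFmono (cthickening_mono hce S) hy) hfu₁
    have hveq : y - f u₁ = z + f u₂ := by
      have h4 : f u₁ + f u₂ = y - z := by rw [← map_add, huu, hu]
      have h5 : y = f u₁ + f u₂ + z := by rw [h4]; abel
      rw [h5]; abel
    have hv2 : y - f u₁ ∈ F (cthickening e U) := by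
      rw [hveq]
      exact add_mem (hFmono (cthickening_mono hce U) hz) hfu₂
    have hvins := hFins _ _ ⟨hv1, hv2⟩
    have hgv : g (y - f u₁) = x'' := by
      rw [map_sub, hgy, hgf, sub_zero]
    have : x'' ∈ F'' (cthickening c
        (cthickening d (cthickening e S) ∩ cthickening d (cthickening e U))) := by
      rw [← hgv]; exact hgc _ ⟨_, hvins, rfl⟩
    have hfin : (c + d) + e ≤ 2*b + 2*c + D₁ + d := by simp only [he]; linarith
    refine hF''mono (Set.subset_inter ?_ ?_) this
    · refine (cthickening_subset_of_subset c Set.inter_subset_left).trans ?_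
      exact (cthick_comp hc hd le_rfl _).trans (cthick_comp (by positivity) henn hfin S)
    · refine (cthickening_subset_of_subset c Set.inter_subset_right).trans ?_
      exact (cthick_comp hc hd le_rfl _).trans (cthick_comp (by positivity) henn hfin U)
end

section
/- Let R be a noetherian ring and let E' →f E →g E'' be an exact sequence in U(X,R). If E' and E'' are locally finitely generated — that is, F'(S) and F''(S) are finitely generated R-modules for every metrically bounded subset S ⊆ X — then E is locally finitely generated. -/
open Metric

variable {X : Type*} [MetricSpace X] {R : Type*} [Ring R]

variable {E' E E'' : Type*} [AddCommGroup E'] [Module R E'] [AddCommGroup E] [Module R E]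
  [AddCommGroup E''] [Module R E'']


private lemma fg_of_le_aux {R M : Type*} [Ring R] [IsNoetherianRing R] [AddCommGroup M]
    [Module R M] {N P : Submodule R M} (h : N ≤ P) (hP : P.FG) : N.FG := by
  haveI := isNoetherian_of_fg_of_noetherian P hP
  have h1 : (N.comap P.subtype).FG := IsNoetherian.noetherian _
  have h2 : (N.comap P.subtype).map P.subtype = N := by
    rw [Submodule.map_comap_eq, Submodule.range_subtype, inf_eq_right.mpr h]
  rw [← h2]
  exact h1.map _

/-- Let `R` be noetherian and `E' →f E →g E''` an exact sequence in
`U(X,R)`.  If `E'` and `E''` are locally finitely generated, then so is `E`. -/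
theorem locallyFG_of_extension [IsNoetherianRing R]
    (F' : Set X → Submodule R E') (F : Set X → Submodule R E) (F'' : Set X → Submodule R E'')
    (hF'mono : Monotone F') (hF'top : F' Set.univ = ⊤)
    (hFmono : Monotone F) (hFtop : F Set.univ = ⊤)
    (hF''mono : Monotone F'') (hF''top : F'' Set.univ = ⊤)
    (f : E' →ₗ[R] E) (g : E →ₗ[R] E'')
    (hf : ∃ b : ℝ, 0 ≤ b ∧ BddBicontrolled F' F f b)
    (hg : ∃ b : ℝ, 0 ≤ b ∧ BddBicontrolled F F'' g b)
    (hfinj : Function.Injective f) (hgsurj : Function.Surjective g)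
    (hexact : LinearMap.range f = LinearMap.ker g)
    (h' : ∀ S : Set X, Bornology.IsBounded S → (F' S).FG)
    (h'' : ∀ S : Set X, Bornology.IsBounded S → (F'' S).FG) :
    ∀ S : Set X, Bornology.IsBounded S → (F S).FG := by
  intro S hS
  obtain ⟨b, -, hfc, hfb⟩ := hf
  obtain ⟨c, -, hgc, -⟩ := hg
  apply Submodule.fg_of_fg_map_of_fg_inf_ker g
  · exact fg_of_le_aux (hgc S) (h'' _ hS.cthickening)
  · have hle : F S ⊓ LinearMap.ker g ≤ (F' (cthickening b S)).map f := by
      rw [← hexact]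
      exact le_trans (le_of_eq (inf_comm _ _)) (hfb S)
    exact fg_of_le_aux hle ((h' _ hS.cthickening).map f)
end
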